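/- Let G be a connected simple graph on n vertices with algebraic connectivity a and diameter D. Then D ≥ 4/(n·a). -/

import Mathlib

open Finset Real Matrix

/-- The Randić index of a finite simple graph:
`R(G) = ∑_{uv ∈ E(G)} 1/√(d(u)·d(v))`. -/
noncomputable def randicIndex {V : Type*} [Fintype V] (G : SimpleGraph V) : ℝ :=
  letI : DecidableRel G.Adj := Classical.decRel _
  ∑ e ∈ G.edgeFinset,
    Sym2.lift ⟨fun u v => 1 / Real.sqrt ((G.degree u : ℝ) * (G.degree v : ℝ)),
      fun u v => by simp [mul_comm]⟩ e

/-- The algebraic connectivity of a graph on `Fin n`: the second smallest eigenvalue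
of the Laplacian matrix, characterized (via Courant–Fischer, since the all-ones vector
is an eigenvector of the smallest eigenvalue `0`) as the infimum of the Rayleigh
quotient over nonzero vectors orthogonal to the all-ones vector. -/
noncomputable def algebraicConnectivity {n : ℕ} (G : SimpleGraph (Fin n)) : ℝ :=
  letI : DecidableRel G.Adj := Classical.decRel _
  sInf {r : ℝ | ∃ x : Fin n → ℝ, x ≠ 0 ∧ (∑ i, x i) = 0 ∧
    r = (x ⬝ᵥ ((G.lapMatrix ℝ).mulVec x)) / (x ⬝ᵥ x)}

/-- The edge connectivity of a graph: the least number of edges whose deletion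
disconnects the graph. -/
noncomputable def edgeConnectivity {V : Type*} [Fintype V] (G : SimpleGraph V) : ℕ :=
  sInf {k : ℕ | ∃ s : Set (Sym2 V), s ⊆ G.edgeSet ∧ s.ncard = k ∧
    ¬ (G.deleteEdges s).Connected}

/-- The star `K_{1,n-1}` on vertex set `Fin n`: vertex `0` is adjacent to all others. -/
def starGraph (n : ℕ) : SimpleGraph (Fin n) where
  Adj i j := i ≠ j ∧ ((i : ℕ) = 0 ∨ (j : ℕ) = 0)
  symm := ⟨fun i j h => ⟨h.1.symm, h.2.symm⟩⟩
  loopless := ⟨fun i h => h.1 rfl⟩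

/-!
For `x ⟂ 𝟏` with maximum `M` and minimum `m`, summing `(x i - m) (M - x i) ≥ 0` gives
`‖x‖² ≤ -n m M ≤ n (M - m)² / 4`. Joining the extreme vertices by a shortest path of length at
most `D` and applying Cauchy–Schwarz along it gives `(M - m)² ≤ D · xᵀ L x`. Hence every Rayleigh
quotient on `𝟏⟂` is at least `4 / (n D)`, and so is their infimum `a`.
-/

lemma four_mul_sum_sq_le_card_mul_sq_sub {ι : Type*} [Fintype ι] {x : ι → ℝ} {m M : ℝ}
    (hx : ∑ i, x i = 0) (hm : ∀ i, m ≤ x i) (hM : ∀ i, x i ≤ M) :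
    4 * ∑ i, x i ^ 2 ≤ Fintype.card ι * (M - m) ^ 2 := by
  have hprod : ∑ i, x i ^ 2 ≤ Fintype.card ι * -(m * M) :=
    calc ∑ i, x i ^ 2 ≤ ∑ i, ((M + m) * x i - m * M) :=
          sum_le_sum fun i _ => by nlinarith [hm i, hM i]
      _ = Fintype.card ι * -(m * M) := by
          rw [sum_sub_distrib, ← mul_sum, hx, sum_const, card_univ, nsmul_eq_mul]; ring
  nlinarith [sq_nonneg (M + m), Nat.cast_nonneg (α := ℝ) (Fintype.card ι)]

namespace SimpleGraph

variable {V : Type*} {G : SimpleGraph V}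

lemma Walk.sum_darts_sub {u v : V} (p : G.Walk u v) (x : V → ℝ) :
    (p.darts.map fun d => x d.fst - x d.snd).sum = x u - x v := by
  induction p with
  | nil => simp
  | cons _ _ ih => simp only [darts_cons, List.map_cons, List.sum_cons, ih]; ring

lemma Walk.IsTrail.sq_sub_le_length_mul_sum_darts {u v : V} {p : G.Walk u v} (hp : p.IsTrail)
    (x : V → ℝ) :
    (x u - x v) ^ 2 ≤ p.length * (p.darts.map fun d => (x d.fst - x d.snd) ^ 2).sum := by
  classical
  have hnd : p.darts.Nodup := hp.edges_nodup.of_map _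
  rw [← p.sum_darts_sub, ← List.sum_toFinset _ hnd, ← List.sum_toFinset _ hnd, ← p.length_darts,
    ← List.toFinset_card_of_nodup hnd]
  exact sq_sum_le_card_mul_sum_sq

variable [Fintype V] [DecidableRel G.Adj]

/-- A trail uses each edge at most once, so its darts and their reversals are pairwise distinct. -/
lemma Walk.IsTrail.two_mul_sum_darts_le {u v : V} {p : G.Walk u v} (hp : p.IsTrail)
    {f : G.Dart → ℝ} (hf : ∀ d, 0 ≤ f d) (hf_symm : ∀ d, f d.symm = f d) :
    2 * (p.darts.map f).sum ≤ ∑ d, f d := by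
  classical
  have hnd : p.darts.Nodup := hp.edges_nodup.of_map _
  have hnd_symm : (p.darts ++ p.darts.map Dart.symm).Nodup := by
    refine List.nodup_append.mpr ⟨hnd, hnd.map (Function.Involutive.injective Dart.symm_symm), ?_⟩
    rintro d hd _ hd' rfl
    obtain ⟨c, hc, rfl⟩ := List.mem_map.mp hd'
    exact c.symm_ne (List.inj_on_of_nodup_map hp.edges_nodup hd hc c.edge_symm)
  calc 2 * (p.darts.map f).sum = ((p.darts ++ p.darts.map Dart.symm).map f).sum := by
        rw [List.map_append, List.sum_append, List.map_map,
          show f ∘ Dart.symm = f from funext hf_symm, two_mul]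
    _ = ∑ d ∈ (p.darts ++ p.darts.map Dart.symm).toFinset, f d :=
        (List.sum_toFinset _ hnd_symm).symm
    _ ≤ ∑ d, f d := sum_le_univ_sum_of_nonneg hf

variable [DecidableEq V]

lemma dotProduct_lapMatrix_mulVec_eq_sum_darts (x : V → ℝ) :
    x ⬝ᵥ (G.lapMatrix ℝ *ᵥ x) = (∑ d : G.Dart, (x d.fst - x d.snd) ^ 2) / 2 := by
  rw [← toLinearMap₂'_apply', lapMatrix_toLinearMap₂', ← Fintype.sum_prod_type', ← sum_filter]
  congr 1
  exact sum_bij' (fun pr h => ⟨pr, (mem_filter.mp h).2⟩) (fun d _ => d.toProd)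
    (fun _ _ => mem_univ _) (fun d _ => mem_filter.mpr ⟨mem_univ _, d.adj⟩)
    (fun _ _ => rfl) (fun _ _ => rfl) (fun _ _ => rfl)

lemma Connected.sq_sub_le_diam_mul_dotProduct_lapMatrix_mulVec (hG : G.Connected) (x : V → ℝ)
    (u v : V) : (x u - x v) ^ 2 ≤ G.diam * (x ⬝ᵥ (G.lapMatrix ℝ *ᵥ x)) := by
  have : Nonempty V := hG.nonempty
  obtain ⟨p, hp, hlen⟩ := hG.exists_path_of_dist u v
  have hlen_le : (p.length : ℝ) ≤ G.diam := by
    rw [hlen]; exact_mod_cast dist_le_diam (G.connected_iff_ediam_ne_top.mp hG)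
  rw [dotProduct_lapMatrix_mulVec_eq_sum_darts]
  calc (x u - x v) ^ 2
      ≤ p.length * (p.darts.map fun d => (x d.fst - x d.snd) ^ 2).sum :=
        hp.isTrail.sq_sub_le_length_mul_sum_darts x
    _ ≤ G.diam * ((∑ d : G.Dart, (x d.fst - x d.snd) ^ 2) / 2) := by
        have := hp.isTrail.two_mul_sum_darts_le (f := fun d => (x d.fst - x d.snd) ^ 2)
          (fun _ => sq_nonneg _)
          (fun d => by simp only [Dart.symm_toProd, Prod.fst_swap, Prod.snd_swap]; ring)
        gcongr
        · exact List.sum_nonneg fun _ h => by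
            obtain ⟨d, _, rfl⟩ := List.mem_map.mp h; positivity
        · linarith

lemma Connected.four_mul_dotProduct_self_le (hG : G.Connected) {x : V → ℝ} (hx : ∑ i, x i = 0) :
    4 * (x ⬝ᵥ x) ≤ Fintype.card V * G.diam * (x ⬝ᵥ (G.lapMatrix ℝ *ᵥ x)) := by
  have : Nonempty V := hG.nonempty
  obtain ⟨u, -, hu⟩ := exists_max_image univ x univ_nonempty
  obtain ⟨v, -, hv⟩ := exists_min_image univ x univ_nonempty
  have hsq := hG.sq_sub_le_diam_mul_dotProduct_lapMatrix_mulVec x u v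
  calc 4 * (x ⬝ᵥ x) = 4 * ∑ i, x i ^ 2 := by simp only [dotProduct, sq]
    _ ≤ Fintype.card V * (x u - x v) ^ 2 :=
        four_mul_sum_sq_le_card_mul_sq_sub hx (fun i => hv i (mem_univ i))
          (fun i => hu i (mem_univ i))
    _ ≤ Fintype.card V * (G.diam * (x ⬝ᵥ (G.lapMatrix ℝ *ᵥ x))) := by gcongr
    _ = _ := by ring

end SimpleGraph

lemma four_le_card_mul_diam_mul_algebraicConnectivity {n : ℕ} {G : SimpleGraph (Fin n)}
    (hG : G.Connected) (ha : 0 < algebraicConnectivity G) :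
    4 ≤ n * G.diam * algebraicConnectivity G := by
  let : DecidableRel G.Adj := Classical.decRel _
  let S : Set ℝ := {r : ℝ | ∃ x : Fin n → ℝ, x ≠ 0 ∧ (∑ i, x i) = 0 ∧
    r = (x ⬝ᵥ ((G.lapMatrix ℝ).mulVec x)) / (x ⬝ᵥ x)}
  have hS : ∀ r ∈ S, 4 ≤ n * G.diam * r := by
    rintro r ⟨x, hx0, hx, rfl⟩
    have hxx : 0 < x ⬝ᵥ x := lt_of_le_of_ne (Fintype.sum_nonneg fun i => mul_self_nonneg (x i))
      (Ne.symm (dotProduct_self_eq_zero.not.mpr hx0))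
    rw [mul_div_assoc', le_div_iff₀ hxx]
    simpa only [Fintype.card_fin] using hG.four_mul_dotProduct_self_le hx
  change 0 < sInf S at ha
  change 4 ≤ n * G.diam * sInf S
  obtain ⟨r₀, hr₀⟩ : S.Nonempty := Set.nonempty_iff_ne_empty.mpr fun h => by simp [h] at ha
  have hnD : 0 < (n : ℝ) * G.diam :=
    lt_of_le_of_ne (by positivity) fun h => by norm_num [← h] at hS; exact hS r₀ hr₀
  exact (div_le_iff₀' hnD).mp (le_csInf ⟨r₀, hr₀⟩ fun r hr => (div_le_iff₀' hnD).mpr (hS r hr))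

theorem diam_ge_four_div_n_mul_algConn
    {n : ℕ} (G : SimpleGraph (Fin n)) (hG : G.Connected) :
    (G.diam : ℝ) ≥ 4 / ((n : ℝ) * algebraicConnectivity G) := by
  rcases le_or_gt (algebraicConnectivity G) 0 with ha | ha
  · exact (div_nonpos_of_nonneg_of_nonpos (by norm_num)
      (mul_nonpos_of_nonneg_of_nonpos (Nat.cast_nonneg n) ha)).trans (Nat.cast_nonneg _)
  · have h4 := four_le_card_mul_diam_mul_algebraicConnectivity hG ha
    exact div_le_of_le_mul₀ (by positivity) (Nat.cast_nonneg _) (by linarith)
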